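/- (Theorem S3) Let M = {(z,t): the sampling vector z and assignment vector t are attainable under the SRSE design and satisfy M_S≤a_S and M_T≤a_T}, and assume the two-stage design is well defined (for every attainable sampling z with M_S≤a_S there is at least one attainable assignment t with M_T≤a_T). Then the total variation distance between the distributions of (Z, T_S) under the single-stage design (uniform over M) and the two-stage design (Z uniform over attainable samplings with M_S≤a_S, then T_S uniform over attainable assignments with M_T≤a_T given Z) satisfies d_TV ≤ 1(M=∅) + 1(M≠∅) · E| P(M_T≤a_T | Z) − P(M_T≤a_T | M_S≤a_S) | / P(M_T≤a_T, M_S≤a_S), where the expectation and probabilities on the right-hand side are computed under the unconditional SRSE design. -/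

import Mathlib

open MeasureTheory ProbabilityTheory Filter Matrix
open scoped ENNReal NNReal

noncomputable section

namespace SurveyExperiments

/-- The uniform probability measure on a finite set of outcomes. -/
def unif {α : Type*} [MeasurableSpace α] (s : Finset α) : Measure α :=
  (s.card : ℝ≥0∞)⁻¹ • ∑ a ∈ s, MeasureTheory.Measure.dirac a

/-- The covariance of two real-valued random variables. -/
def covRV {Ω : Type*} [MeasurableSpace Ω] (μ : Measure Ω) (f g : Ω → ℝ) : ℝ :=
  ∫ ω, (f ω - ∫ x, f x ∂μ) * (g ω - ∫ x, g x ∂μ) ∂μ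

/-- The total variation distance between two measures. -/
def dTV {α : Type*} [MeasurableSpace α] (P Q : Measure α) : ℝ :=
  ⨆ A : Set α, |(P A).toReal - (Q A).toReal|

/-- The standard Gaussian measure on `ℝ^J`. -/
def stdGaussianPi (J : ℕ) : Measure (Fin J → ℝ) := Measure.pi fun _ => gaussianReal 0 1

/-- The law `L_{J,a}` of the first coordinate of a standard Gaussian vector in `ℝ^J`
conditioned on the event that its squared norm is at most `a`. -/
def truncGaussian (J : ℕ) [NeZero J] (a : ℝ) : Measure ℝ :=
  Measure.map (fun x => x 0)
    (ProbabilityTheory.cond (stdGaussianPi J) {x | ∑ i, (x i) ^ 2 ≤ a})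

/-- `ν_{J,a}`, the variance of the truncated Gaussian `L_{J,a}`. -/
def nu (J : ℕ) [NeZero J] (a : ℝ) : ℝ := variance id (truncGaussian J a)

/-- The law of `√v (√(1-rW-rX) ε + √rW L_{J1,aS} + √rX L_{J2,aT})` with independent
`ε ~ N(0,1)`, `L_{J1,aS}`, `L_{J2,aT}`. -/
def rrLimitLaw (v rW rX : ℝ) (J1 J2 : ℕ) [NeZero J1] [NeZero J2] (aS aT : ℝ) : Measure ℝ :=
  Measure.map
    (fun p : ℝ × ℝ × ℝ =>
      Real.sqrt v * (Real.sqrt (1 - rW - rX) * p.1 + Real.sqrt rW * p.2.1 + Real.sqrt rX * p.2.2))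
    ((gaussianReal 0 1).prod ((truncGaussian J1 aS).prod (truncGaussian J2 aT)))

/-- The `p`-th quantile of a measure on `ℝ`. -/
def quantile (μ : Measure ℝ) (p : ℝ) : ℝ := sInf {x : ℝ | ENNReal.ofReal p ≤ μ (Set.Iic x)}

/-- The data of a stratified (randomized survey) experiment: a population of `N` units
partitioned into `K` strata by `st`, with `nk k` units sampled and `nk1 k` sampled units
treated in stratum `k`. -/
structure SRSE where
  K : ℕ
  N : ℕ
  st : Fin N → Fin K
  nk : Fin K → ℕ
  nk1 : Fin K → ℕ

namespace SRSE

variable (E : SRSE)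

def stratum (k : Fin E.K) : Finset (Fin E.N) := Finset.univ.filter fun i => E.st i = k
def Nk (k : Fin E.K) : ℕ := (E.stratum k).card
def nk0 (k : Fin E.K) : ℕ := E.nk k - E.nk1 k
def n : ℕ := ∑ k, E.nk k
def Pi (k : Fin E.K) : ℝ := (E.Nk k : ℝ) / (E.N : ℝ)
def pik (k : Fin E.K) : ℝ := (E.nk k : ℝ) / (E.n : ℝ)
def fk (k : Fin E.K) : ℝ := (E.nk k : ℝ) / (E.Nk k : ℝ)
def f : ℝ := (E.n : ℝ) / (E.N : ℝ)
def e1 (k : Fin E.K) : ℝ := (E.nk1 k : ℝ) / (E.nk k : ℝ)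
def e0 (k : Fin E.K) : ℝ := (E.nk0 k : ℝ) / (E.nk k : ℝ)

/-- Sample space: a pair of sampling indicators and treatment indicators. -/
abbrev Omega := (Fin E.N → Bool) × (Fin E.N → Bool)

/-- The attainable pairs of indicators: `nk k` sampled and `nk1 k` treated units in each
stratum `k`, with treated units sampled. -/
def valid : Finset E.Omega :=
  Finset.univ.filter fun ω =>
    (∀ k, ((E.stratum k).filter fun i => ω.1 i = true).card = E.nk k) ∧
    (∀ k, ((E.stratum k).filter fun i => ω.1 i = true ∧ ω.2 i = true).card = E.nk1 k) ∧
    (∀ i, ω.2 i = true → ω.1 i = true)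

/-- The stratified randomized survey experiment (SRSE) design: stratified random sampling
without replacement followed by stratified randomization, i.e. the uniform distribution over
all attainable pairs of indicator vectors. -/
def P : Measure E.Omega := unif E.valid

def Z (ω : E.Omega) (i : Fin E.N) : ℝ := if ω.1 i then 1 else 0
def T (ω : E.Omega) (i : Fin E.N) : ℝ := if ω.2 i then 1 else 0

def meanK (a : Fin E.N → ℝ) (k : Fin E.K) : ℝ := (∑ i ∈ E.stratum k, a i) / (E.Nk k : ℝ)
def covK (a b : Fin E.N → ℝ) (k : Fin E.K) : ℝ :=
  (∑ i ∈ E.stratum k, (a i - E.meanK a k) * (b i - E.meanK b k)) / ((E.Nk k : ℝ) - 1)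
def meanAll (a : Fin E.N → ℝ) : ℝ := (∑ i, a i) / (E.N : ℝ)
def varAll (a : Fin E.N → ℝ) : ℝ := (∑ i, (a i - E.meanAll a) ^ 2) / ((E.N : ℝ) - 1)

def mean1 (a : Fin E.N → ℝ) (k : Fin E.K) (ω : E.Omega) : ℝ :=
  (∑ i ∈ E.stratum k, E.Z ω i * E.T ω i * a i) / (E.nk1 k : ℝ)
def mean0 (a : Fin E.N → ℝ) (k : Fin E.K) (ω : E.Omega) : ℝ :=
  (∑ i ∈ E.stratum k, E.Z ω i * (1 - E.T ω i) * a i) / (E.nk0 k : ℝ)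
def meanS (a : Fin E.N → ℝ) (k : Fin E.K) (ω : E.Omega) : ℝ :=
  (∑ i ∈ E.stratum k, E.Z ω i * a i) / (E.nk k : ℝ)

/-- The stratified difference-in-means estimator. -/
def hatTau (Y1 Y0 : Fin E.N → ℝ) (ω : E.Omega) : ℝ :=
  ∑ k, E.Pi k * (E.mean1 Y1 k ω - E.mean0 Y0 k ω)
/-- The finite-population average treatment effect. -/
def tau (Y1 Y0 : Fin E.N → ℝ) : ℝ := ∑ k, E.Pi k * (E.meanK Y1 k - E.meanK Y0 k)
/-- The treated/control covariate-mean-difference `τ̂_X`. -/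
def hatTauX {J : ℕ} (X : Fin E.N → Fin J → ℝ) (ω : E.Omega) : Fin J → ℝ := fun j =>
  ∑ k, E.Pi k * (E.mean1 (fun i => X i j) k ω - E.mean0 (fun i => X i j) k ω)
/-- The sampled/population covariate-mean-difference `δ̂_W`. -/
def hatDeltaW {J : ℕ} (W : Fin E.N → Fin J → ℝ) (ω : E.Omega) : Fin J → ℝ := fun j =>
  ∑ k, E.Pi k * (E.meanS (fun i => W i j) k ω - E.meanK (fun i => W i j) k)

def sCov1 (a b : Fin E.N → ℝ) (k : Fin E.K) (ω : E.Omega) : ℝ :=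
  (∑ i ∈ E.stratum k, E.Z ω i * E.T ω i * (a i - E.mean1 a k ω) * (b i - E.mean1 b k ω)) /
    ((E.nk1 k : ℝ) - 1)
def sCov0 (a b : Fin E.N → ℝ) (k : Fin E.K) (ω : E.Omega) : ℝ :=
  (∑ i ∈ E.stratum k, E.Z ω i * (1 - E.T ω i) * (a i - E.mean0 a k ω) * (b i - E.mean0 b k ω)) /
    ((E.nk0 k : ℝ) - 1)
def sCovS (a b : Fin E.N → ℝ) (k : Fin E.K) (ω : E.Omega) : ℝ :=
  (∑ i ∈ E.stratum k, E.Z ω i * (a i - E.meanS a k ω) * (b i - E.meanS b k ω)) /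
    ((E.nk k : ℝ) - 1)

/-- The `(τ,τ)` entry of the covariance matrix `V`. -/
def Vtt (Y1 Y0 : Fin E.N → ℝ) : ℝ :=
  ∑ k, (E.Pi k) ^ 2 / E.pik k *
    (E.covK Y1 Y1 k / E.e1 k + E.covK Y0 Y0 k / E.e0 k -
      E.fk k * E.covK (fun i => Y1 i - Y0 i) (fun i => Y1 i - Y0 i) k)
/-- The `(τ,X)` block of `V`. -/
def VtX {J : ℕ} (Y1 Y0 : Fin E.N → ℝ) (X : Fin E.N → Fin J → ℝ) : Fin J → ℝ := fun j =>
  ∑ k, (E.Pi k) ^ 2 / E.pik k *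
    (E.covK (fun i => X i j) Y1 k / E.e1 k + E.covK (fun i => X i j) Y0 k / E.e0 k)
/-- The `(τ,W)` block of `V`. -/
def VtW {J : ℕ} (Y1 Y0 : Fin E.N → ℝ) (W : Fin E.N → Fin J → ℝ) : Fin J → ℝ := fun j =>
  ∑ k, (E.Pi k) ^ 2 / E.pik k *
    ((1 - E.fk k) * E.covK (fun i => W i j) (fun i => Y1 i - Y0 i) k)
/-- The `(X,X)` block of `V`. -/
def VXX {J : ℕ} (X : Fin E.N → Fin J → ℝ) : Matrix (Fin J) (Fin J) ℝ :=
  Matrix.of fun j j' =>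
    ∑ k, (E.Pi k) ^ 2 / E.pik k *
      (E.covK (fun i => X i j) (fun i => X i j') k / (E.e1 k * E.e0 k))
/-- The `(W,W)` block of `V`. -/
def VWW {J : ℕ} (W : Fin E.N → Fin J → ℝ) : Matrix (Fin J) (Fin J) ℝ :=
  Matrix.of fun j j' =>
    ∑ k, (E.Pi k) ^ 2 / E.pik k *
      ((1 - E.fk k) * E.covK (fun i => W i j) (fun i => W i j') k)

/-- The covariance matrix of `δ̂_W` under stratified random sampling. -/
def covWSampling {J : ℕ} (W : Fin E.N → Fin J → ℝ) : Matrix (Fin J) (Fin J) ℝ :=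
  Matrix.of fun j j' =>
    ∑ k, (E.Pi k) ^ 2 * ((E.nk k : ℝ)⁻¹ - (E.Nk k : ℝ)⁻¹) *
      E.covK (fun i => W i j) (fun i => W i j') k
/-- The Mahalanobis sampling-balance criterion `M_S`. -/
def MS {J : ℕ} (W : Fin E.N → Fin J → ℝ) (ω : E.Omega) : ℝ :=
  E.hatDeltaW W ω ⬝ᵥ ((E.covWSampling W)⁻¹ *ᵥ E.hatDeltaW W ω)
/-- The conditional covariance matrix of `τ̂_X` given the sample. -/
def covXAssign {J : ℕ} (X : Fin E.N → Fin J → ℝ) (ω : E.Omega) : Matrix (Fin J) (Fin J) ℝ :=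
  Matrix.of fun j j' =>
    ∑ k, (E.Pi k) ^ 2 * ((E.nk k : ℝ) / ((E.nk1 k : ℝ) * (E.nk0 k : ℝ))) *
      E.sCovS (fun i => X i j) (fun i => X i j') k ω
/-- The Mahalanobis assignment-balance criterion `M_T`. -/
def MT {J : ℕ} (X : Fin E.N → Fin J → ℝ) (ω : E.Omega) : ℝ :=
  E.hatTauX X ω ⬝ᵥ ((E.covXAssign X ω)⁻¹ *ᵥ E.hatTauX X ω)
/-- The acceptance event `{M_S ≤ a_S, M_T ≤ a_T}`. -/
def accept {J1 J2 : ℕ} (W : Fin E.N → Fin J1 → ℝ) (X : Fin E.N → Fin J2 → ℝ) (aS aT : ℝ) :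
    Set E.Omega := {ω | E.MS W ω ≤ aS ∧ E.MT X ω ≤ aT}

/-- The SRSRR design: the SRSE design conditioned on acceptance of both balance criteria. -/
def Prr {J1 J2 : ℕ} (W : Fin E.N → Fin J1 → ℝ) (X : Fin E.N → Fin J2 → ℝ) (aS aT : ℝ) :
    Measure E.Omega := ProbabilityTheory.cond E.P (E.accept W X aS aT)

/-- The conservative variance estimator `V̂_ττ`. -/
def hatVtt (Y1 Y0 : Fin E.N → ℝ) (ω : E.Omega) : ℝ :=
  ∑ k, (E.Pi k) ^ 2 / E.pik k * (E.sCov1 Y1 Y1 k ω / E.e1 k + E.sCov0 Y0 Y0 k ω / E.e0 k)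
/-- The estimator `V̂_τX`. -/
def hatVtX {J : ℕ} (Y1 Y0 : Fin E.N → ℝ) (X : Fin E.N → Fin J → ℝ) (ω : E.Omega) : Fin J → ℝ :=
  fun j => ∑ k, (E.Pi k) ^ 2 / E.pik k *
    (E.sCov1 (fun i => X i j) Y1 k ω / E.e1 k + E.sCov0 (fun i => X i j) Y0 k ω / E.e0 k)
/-- The estimator `V̂_τW`. -/
def hatVtW {J : ℕ} (Y1 Y0 : Fin E.N → ℝ) (W : Fin E.N → Fin J → ℝ) (ω : E.Omega) : Fin J → ℝ :=
  fun j => ∑ k, (E.Pi k) ^ 2 / E.pik k *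
    ((1 - E.fk k) * (E.sCov1 (fun i => W i j) Y1 k ω - E.sCov0 (fun i => W i j) Y0 k ω))
/-- The estimator `V̂_XX`. -/
def hatVXX {J : ℕ} (X : Fin E.N → Fin J → ℝ) (ω : E.Omega) : Matrix (Fin J) (Fin J) ℝ :=
  Matrix.of fun j j' => ∑ k, (E.Pi k) ^ 2 / E.pik k *
    (E.sCovS (fun i => X i j) (fun i => X i j') k ω / (E.e1 k * E.e0 k))
/-- The plug-in estimator `R̂²_W` (also used for `R̂²_E` with analysis-stage covariates). -/
def hatRW2 {J : ℕ} (Y1 Y0 : Fin E.N → ℝ) (W : Fin E.N → Fin J → ℝ) (ω : E.Omega) : ℝ :=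
  (E.hatVtW Y1 Y0 W ω ⬝ᵥ ((E.VWW W)⁻¹ *ᵥ E.hatVtW Y1 Y0 W ω)) / E.hatVtt Y1 Y0 ω
/-- The plug-in estimator `R̂²_X` (also used for `R̂²_C` with analysis-stage covariates). -/
def hatRX2 {J : ℕ} (Y1 Y0 : Fin E.N → ℝ) (X : Fin E.N → Fin J → ℝ) (ω : E.Omega) : ℝ :=
  (E.hatVtX Y1 Y0 X ω ⬝ᵥ ((E.hatVXX X ω)⁻¹ *ᵥ E.hatVtX Y1 Y0 X ω)) / E.hatVtt Y1 Y0 ω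

/-- The estimated regression-adjustment coefficient `β̂`. -/
def hatBeta {J : ℕ} (Y1 Y0 : Fin E.N → ℝ) (C : Fin E.N → Fin J → ℝ) (ω : E.Omega) : Fin J → ℝ :=
  (E.hatVXX C ω)⁻¹ *ᵥ E.hatVtX Y1 Y0 C ω
/-- The estimated regression-adjustment coefficient `γ̂`. -/
def hatGamma {J : ℕ} (Y1 Y0 : Fin E.N → ℝ) (Ecov : Fin E.N → Fin J → ℝ) (ω : E.Omega) :
    Fin J → ℝ :=
  (E.VWW Ecov)⁻¹ *ᵥ E.hatVtW Y1 Y0 Ecov ω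
/-- The regression-adjusted estimator `τ̂_adj = τ̂ - β̂ᵀτ̂_C - γ̂ᵀδ̂_E`. -/
def hatTauAdj {J3 J4 : ℕ} (Y1 Y0 : Fin E.N → ℝ) (C : Fin E.N → Fin J4 → ℝ)
    (Ecov : Fin E.N → Fin J3 → ℝ) (ω : E.Omega) : ℝ :=
  E.hatTau Y1 Y0 ω - E.hatBeta Y1 Y0 C ω ⬝ᵥ E.hatTauX C ω -
    E.hatGamma Y1 Y0 Ecov ω ⬝ᵥ E.hatDeltaW Ecov ω

/-- The vector stratified difference-in-means estimator `τ̂_R`. -/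
def hatTauVec {d : ℕ} (R1 R0 : Fin E.N → Fin d → ℝ) (ω : E.Omega) : Fin d → ℝ := fun j =>
  ∑ k, E.Pi k * (E.mean1 (fun i => R1 i j) k ω - E.mean0 (fun i => R0 i j) k ω)
/-- The vector estimand `τ_R`. -/
def tauVec {d : ℕ} (R1 R0 : Fin E.N → Fin d → ℝ) : Fin d → ℝ := fun j =>
  ∑ k, E.Pi k * (E.meanK (fun i => R1 i j) k - E.meanK (fun i => R0 i j) k)
/-- The covariance matrix `V_R` of `√n (τ̂_R - τ_R)`. -/
def VRmat {d : ℕ} (R1 R0 : Fin E.N → Fin d → ℝ) : Matrix (Fin d) (Fin d) ℝ :=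
  Matrix.of fun j j' =>
    ∑ k, (E.Pi k) ^ 2 / E.pik k *
      (E.covK (fun i => R1 i j) (fun i => R1 i j') k / E.e1 k +
        E.covK (fun i => R0 i j) (fun i => R0 i j') k / E.e0 k -
        E.fk k * E.covK (fun i => R1 i j - R0 i j) (fun i => R1 i j' - R0 i j') k)

/-- The attainable sampling vectors. -/
def validZ : Finset (Fin E.N → Bool) :=
  Finset.univ.filter fun z => ∀ k, ((E.stratum k).filter fun i => z i = true).card = E.nk k
/-- Stratified random sampling without replacement: the uniform distribution over attainable
sampling vectors. -/
def Psamp : Measure (Fin E.N → Bool) := unif E.validZ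
/-- `δ̂_W` as a function of the sampling vector alone. -/
def deltaWz {J : ℕ} (W : Fin E.N → Fin J → ℝ) (z : Fin E.N → Bool) : Fin J → ℝ := fun j =>
  ∑ k, E.Pi k *
    ((∑ i ∈ E.stratum k, (if z i then (1 : ℝ) else 0) * W i j) / (E.nk k : ℝ) -
      E.meanK (fun i => W i j) k)

/-- The attainable treatment-assignment vectors given the sampling vector `z`. -/
def validT (z : Fin E.N → Bool) : Finset (Fin E.N → Bool) :=
  Finset.univ.filter fun t =>
    (∀ k, ((E.stratum k).filter fun i => z i = true ∧ t i = true).card = E.nk1 k) ∧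
    (∀ i, t i = true → z i = true)
/-- Stratified randomization of the sampled units, conditionally on the sampling vector `z`. -/
def Pgiven (z : Fin E.N → Bool) : Measure E.Omega :=
  unif ((E.validT z).image fun t => (z, t))

/-- `M_S` as a function of the sampling vector alone. -/
def MSz {J : ℕ} (W : Fin E.N → Fin J → ℝ) (z : Fin E.N → Bool) : ℝ := E.MS W (z, z)
/-- The acceptable sampling vectors. -/
def acceptZ {J : ℕ} (W : Fin E.N → Fin J → ℝ) (aS : ℝ) : Finset (Fin E.N → Bool) :=
  E.validZ.filter fun z => E.MSz W z ≤ aS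
/-- The acceptable assignment vectors given a sampling vector `z`. -/
def acceptT {J : ℕ} (X : Fin E.N → Fin J → ℝ) (aT : ℝ) (z : Fin E.N → Bool) :
    Finset (Fin E.N → Bool) := (E.validT z).filter fun t => E.MT X (z, t) ≤ aT
/-- The set `M` of jointly acceptable pairs. -/
def acceptedPairs {J1 J2 : ℕ} (W : Fin E.N → Fin J1 → ℝ) (X : Fin E.N → Fin J2 → ℝ)
    (aS aT : ℝ) : Finset E.Omega :=
  E.valid.filter fun ω => E.MS W ω ≤ aS ∧ E.MT X ω ≤ aT
/-- The single-stage rejective design: uniform over jointly acceptable pairs. -/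
def singleStage {J1 J2 : ℕ} (W : Fin E.N → Fin J1 → ℝ) (X : Fin E.N → Fin J2 → ℝ)
    (aS aT : ℝ) : Measure E.Omega := unif (E.acceptedPairs W X aS aT)
/-- The two-stage rejective design: first a uniform acceptable sampling, then a uniform
acceptable assignment given the sampling. -/
def twoStage {J1 J2 : ℕ} (W : Fin E.N → Fin J1 → ℝ) (X : Fin E.N → Fin J2 → ℝ) (aS aT : ℝ) :
    Measure E.Omega :=
  ((E.acceptZ W aS).card : ℝ≥0∞)⁻¹ • ∑ z ∈ E.acceptZ W aS,
    (((E.acceptT X aT z).card : ℝ≥0∞)⁻¹ • ∑ t ∈ E.acceptT X aT z, Measure.dirac (z, t))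
/-- The conditional acceptance probability `P(M_T ≤ a_T ∣ Z = z)`. -/
def condAcceptProb {J : ℕ} (X : Fin E.N → Fin J → ℝ) (aT : ℝ) (z : Fin E.N → Bool) : ℝ :=
  ((E.acceptT X aT z).card : ℝ) / ((E.validT z).card : ℝ)

end SRSE

/-!
Both designs are mixtures, over the acceptable samplings `z`, of the uniform law on the
acceptable assignments given `z`; only the mixing weights differ (`#acceptT z / #M` for the
single-stage design, `1 / #acceptZ` for the two-stage one), so the total variation distance is at
most the `ℓ¹` distance between the weights. Every attainable sampling admits the same number
`∏ₖ C(n_k, n_k1)` of attainable assignments, so the SRSE conditional probabilities are ratios of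
these counts and the weight distance is the restriction to acceptable samplings of the
expectation on the right-hand side.
-/

section UniformMeasure

variable {α β : Type*} [MeasurableSpace α] [MeasurableSingletonClass α]

open Classical in
theorem inv_card_smul_sum_dirac_apply (s : Finset β) (f : β → α) (A : Set α) :
    ((s.card : ℝ≥0∞)⁻¹ • ∑ b ∈ s, Measure.dirac (f b)) A =
      ((s.filter fun b => f b ∈ A).card : ℝ≥0∞) / s.card := by
  rw [Measure.smul_apply, Measure.finsetSum_apply, smul_eq_mul, ENNReal.div_eq_inv_mul,
    Finset.card_filter, Nat.cast_sum]
  congr 1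
  refine Finset.sum_congr rfl fun b _ => ?_
  by_cases hb : f b ∈ A <;> simp [Measure.dirac_apply, hb]

open Classical in
theorem unif_apply_toReal (s : Finset α) (A : Set α) :
    (unif s A).toReal = ((s.filter (· ∈ A)).card : ℝ) / s.card := by
  have h := inv_card_smul_sum_dirac_apply s id A
  simp only [id] at h
  rw [unif, h, ENNReal.toReal_div]
  simp

theorem integral_unif [Finite α] (s : Finset α) (f : α → ℝ) :
    ∫ a, f a ∂unif s = (∑ a ∈ s, f a) / s.card := by
  rw [unif, integral_smul_measure, integral_finsetSum_measure fun _ _ => Integrable.of_finite]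
  simp [integral_dirac, div_eq_inv_mul]

end UniformMeasure

theorem abs_div_sub_div_div_le {a m x y : ℝ} (ha : 0 ≤ a) (ham : a ≤ m) :
    |a / x - a / m / y| ≤ |m / x - 1 / y| := by
  rcases (ha.trans ham).eq_or_lt with hm | hm
  · obtain rfl : a = 0 := le_antisymm (hm ▸ ham) ha
    simp
  calc |a / x - a / m / y| = |a / m * (m / x - 1 / y)| := by
        congr 1
        field_simp
    _ = a / m * |m / x - 1 / y| := by rw [abs_mul, abs_of_nonneg (div_nonneg ha hm.le)]
    _ ≤ |m / x - 1 / y| := mul_le_of_le_one_left (abs_nonneg _) (div_le_one_of_le₀ ham hm.le)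

namespace SRSE

variable (E : SRSE) {J1 J2 : ℕ} (W : Fin E.N → Fin J1 → ℝ) (X : Fin E.N → Fin J2 → ℝ)
  (aS aT : ℝ)

theorem mem_stratum {k : Fin E.K} {i : Fin E.N} : i ∈ E.stratum k ↔ E.st i = k := by
  simp [stratum]

theorem mem_valid {ω : E.Omega} : ω ∈ E.valid ↔ ω.1 ∈ E.validZ ∧ ω.2 ∈ E.validT ω.1 := by
  simp only [valid, validZ, validT, Finset.mem_filter, Finset.mem_univ, true_and]

theorem MS_eq_MSz (ω : E.Omega) : E.MS W ω = E.MSz W ω.1 := rfl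

theorem mem_acceptedPairs {ω : E.Omega} :
    ω ∈ E.acceptedPairs W X aS aT ↔ ω.1 ∈ E.acceptZ W aS ∧ ω.2 ∈ E.acceptT X aT ω.1 := by
  simp only [acceptedPairs, acceptZ, acceptT, Finset.mem_filter]
  rw [mem_valid, MS_eq_MSz]
  tauto

def sampledIn (z : Fin E.N → Bool) (k : Fin E.K) : Finset (Fin E.N) :=
  (E.stratum k).filter (z · = true)

theorem mem_sampledIn {z : Fin E.N → Bool} {k : Fin E.K} {i : Fin E.N} :
    i ∈ E.sampledIn z k ↔ E.st i = k ∧ z i = true := by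
  simp [sampledIn, mem_stratum]

theorem mem_validT {z t : Fin E.N → Bool} :
    t ∈ E.validT z ↔
      (∀ k, ((E.sampledIn z k).filter (t · = true)).card = E.nk1 k) ∧
        ∀ i, t i = true → z i = true := by
  simp [validT, sampledIn, Finset.filter_filter]

theorem card_validT_eq_card_piFinset (z : Fin E.N → Bool) :
    (E.validT z).card =
      (Fintype.piFinset fun k => (E.sampledIn z k).powersetCard (E.nk1 k)).card := by
  have hmemG : ∀ g : Fin E.K → Finset (Fin E.N),
      g ∈ Fintype.piFinset (fun k => (E.sampledIn z k).powersetCard (E.nk1 k)) ↔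
        ∀ k, g k ⊆ E.sampledIn z k ∧ (g k).card = E.nk1 k := fun g => by
    simp only [Fintype.mem_piFinset, Finset.mem_powersetCard]
  refine Finset.card_nbij' (fun t k => (E.sampledIn z k).filter (t · = true))
    (fun g i => decide (i ∈ g (E.st i))) (fun t ht => ?_) (fun g hg => ?_)
    (fun t ht => ?_) (fun g hg => ?_)
  · rw [Finset.mem_coe, mem_validT] at ht
    exact (hmemG _).2 fun k => ⟨Finset.filter_subset _ _, ht.1 k⟩
  · rw [Finset.mem_coe, hmemG] at hg
    have hgS : ∀ k i, i ∈ g k → E.st i = k ∧ z i = true := fun k i hi =>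
      E.mem_sampledIn.1 ((hg k).1 hi)
    refine E.mem_validT.2 ⟨fun k => ?_, fun i hi => (hgS _ i (by simpa using hi)).2⟩
    convert (hg k).2 using 2
    ext i
    simp only [Finset.mem_filter, mem_sampledIn, decide_eq_true_eq]
    constructor
    · rintro ⟨⟨rfl, -⟩, hi⟩
      exact hi
    · intro hi
      obtain ⟨rfl, hzi⟩ := hgS k i hi
      exact ⟨⟨rfl, hzi⟩, hi⟩
  · rw [Finset.mem_coe, mem_validT] at ht
    funext i
    cases hti : t i <;> simp [mem_sampledIn, hti, ht.2 i]
  · rw [Finset.mem_coe, hmemG] at hg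
    funext k
    ext i
    simp only [Finset.mem_filter, decide_eq_true_eq]
    constructor
    · rintro ⟨hi, hig⟩
      rwa [(E.mem_sampledIn.1 hi).1] at hig
    · intro hi
      have hiS := (hg k).1 hi
      exact ⟨hiS, (E.mem_sampledIn.1 hiS).1 ▸ hi⟩

theorem card_validT {z : Fin E.N → Bool} (hz : z ∈ E.validZ) :
    (E.validT z).card = ∏ k, (E.nk k).choose (E.nk1 k) := by
  have hS : ∀ k, (E.sampledIn z k).card = E.nk k := (Finset.mem_filter.mp hz).2
  simp [card_validT_eq_card_piFinset, hS]

open Classical in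
theorem card_filter_acceptedPairs (A : Set E.Omega) :
    ((E.acceptedPairs W X aS aT).filter (· ∈ A)).card =
      ∑ z ∈ E.acceptZ W aS, ((E.acceptT X aT z).filter fun t => (z, t) ∈ A).card := by
  rw [Finset.card_eq_sum_ones]
  refine (Finset.sum_finset_product' (f := fun _ _ => 1) _ (E.acceptZ W aS)
    (fun z => (E.acceptT X aT z).filter fun t => (z, t) ∈ A) fun ω => ?_).trans (by simp)
  simp only [Finset.mem_filter, mem_acceptedPairs]
  tauto

open Classical in
theorem singleStage_apply_toReal (A : Set E.Omega) :
    (E.singleStage W X aS aT A).toReal =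
      (∑ z ∈ E.acceptZ W aS, (((E.acceptT X aT z).filter fun t => (z, t) ∈ A).card : ℝ)) /
        (E.acceptedPairs W X aS aT).card := by
  rw [singleStage, unif_apply_toReal, card_filter_acceptedPairs, Nat.cast_sum]

open Classical in
theorem twoStage_apply_toReal (A : Set E.Omega) :
    (E.twoStage W X aS aT A).toReal =
      (∑ z ∈ E.acceptZ W aS, (((E.acceptT X aT z).filter fun t => (z, t) ∈ A).card : ℝ) /
        (E.acceptT X aT z).card) / (E.acceptZ W aS).card := by
  rw [twoStage, Measure.smul_apply, Measure.finsetSum_apply, smul_eq_mul]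
  simp only [inv_card_smul_sum_dirac_apply]
  rw [ENNReal.toReal_mul, ENNReal.toReal_sum fun z _ => ?_, div_eq_inv_mul]
  · simp
  refine ne_top_of_le_ne_top ENNReal.one_ne_top (ENNReal.div_le_of_le_mul ?_)
  rw [one_mul]
  exact_mod_cast Finset.card_le_card (Finset.filter_subset _ _)

open Classical in
theorem dTV_singleStage_twoStage_le :
    dTV (E.singleStage W X aS aT) (E.twoStage W X aS aT) ≤
      ∑ z ∈ E.acceptZ W aS,
        |((E.acceptT X aT z).card : ℝ) / (E.acceptedPairs W X aS aT).card -
          1 / (E.acceptZ W aS).card| := by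
  refine ciSup_le fun A => ?_
  rw [singleStage_apply_toReal, twoStage_apply_toReal, Finset.sum_div, Finset.sum_div,
    ← Finset.sum_sub_distrib]
  refine (Finset.abs_sum_le_sum_abs _ _).trans (Finset.sum_le_sum fun z _ => ?_)
  refine abs_div_sub_div_div_le (Nat.cast_nonneg _) ?_
  exact_mod_cast Finset.card_le_card (Finset.filter_subset _ _)

theorem P_accept_toReal :
    (E.P (E.accept W X aS aT)).toReal =
      ((E.acceptedPairs W X aS aT).card : ℝ) / E.valid.card := by
  classical
  rw [P, unif_apply_toReal, acceptedPairs]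
  congr 3
  exact Finset.filter_congr fun _ _ => Iff.rfl

theorem P_MS_le_toReal :
    (E.P {ω | E.MS W ω ≤ aS}).toReal =
      ((E.acceptZ W aS).card * ∏ k, (E.nk k).choose (E.nk1 k) : ℕ) / E.valid.card := by
  classical
  rw [P, unif_apply_toReal]
  congr 2
  rw [Finset.card_eq_sum_ones]
  refine (Finset.sum_finset_product' (f := fun _ _ => 1) _ (E.acceptZ W aS) E.validT
    fun ω => ?_).trans ?_
  · rw [Finset.mem_filter, mem_valid, acceptZ, Finset.mem_filter, Set.mem_ofPred_eq, MS_eq_MSz]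
    tauto
  · simp only [Finset.sum_const, smul_eq_mul, mul_one]
    exact Finset.sum_const_nat fun z hz => E.card_validT (Finset.mem_filter.mp hz).1

theorem integral_P_comp_fst (g : (Fin E.N → Bool) → ℝ) :
    ∫ ω, g ω.1 ∂E.P =
      (∑ z ∈ E.validZ, ((∏ k, (E.nk k).choose (E.nk1 k) : ℕ) : ℝ) * g z) / E.valid.card := by
  rw [P, integral_unif,
    Finset.sum_finset_product' (f := fun z _ => g z) _ _ _ fun ω => E.mem_valid]
  congr 1
  refine Finset.sum_congr rfl fun z hz => ?_
  rw [Finset.sum_const, E.card_validT hz, nsmul_eq_mul]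

theorem condAcceptProb_eq {z : Fin E.N → Bool} (hz : z ∈ E.validZ) :
    E.condAcceptProb X aT z =
      (E.acceptT X aT z).card / ((∏ k, (E.nk k).choose (E.nk1 k) : ℕ) : ℝ) := by
  rw [condAcceptProb, E.card_validT hz]

theorem prod_choose_pos (h : E.valid.Nonempty) : 0 < ∏ k, (E.nk k).choose (E.nk1 k) := by
  obtain ⟨ω, hω⟩ := h
  rw [E.mem_valid] at hω
  rw [← E.card_validT hω.1]
  exact Finset.card_pos.2 ⟨_, hω.2⟩

theorem sum_abs_le_integral_div (h : (E.acceptedPairs W X aS aT).Nonempty) :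
    ∑ z ∈ E.acceptZ W aS,
        |((E.acceptT X aT z).card : ℝ) / (E.acceptedPairs W X aS aT).card -
          1 / (E.acceptZ W aS).card| ≤
      (∫ ω, |E.condAcceptProb X aT ω.1 -
          (E.P (E.accept W X aS aT)).toReal / (E.P {ω' | E.MS W ω' ≤ aS}).toReal| ∂E.P) /
        (E.P (E.accept W X aS aT)).toReal := by
  have hV : E.valid.Nonempty := h.mono (Finset.filter_subset _ _)
  have hVc : (0 : ℝ) < E.valid.card := by exact_mod_cast hV.card_pos
  have hcE : (E.P (E.accept W X aS aT)).toReal / (E.P {ω' | E.MS W ω' ≤ aS}).toReal =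
      (E.acceptedPairs W X aS aT).card /
        ((E.acceptZ W aS).card * ((∏ k, (E.nk k).choose (E.nk1 k) : ℕ) : ℝ)) := by
    rw [P_accept_toReal, P_MS_le_toReal, Nat.cast_mul, div_div_div_cancel_right₀ hVc.ne']
  rw [hcE, E.integral_P_comp_fst fun z => |E.condAcceptProb X aT z - _|, P_accept_toReal,
    div_div_div_cancel_right₀ hVc.ne', Finset.sum_div]
  obtain ⟨ω, hω⟩ := h
  set c : ℕ := ∏ k, (E.nk k).choose (E.nk1 k)
  set M : ℕ := (E.acceptedPairs W X aS aT).card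
  set Z : ℕ := (E.acceptZ W aS).card
  have hc : (0 : ℝ) < c := by exact_mod_cast E.prod_choose_pos hV
  have hM : (0 : ℝ) < M := by exact_mod_cast Finset.card_pos.2 ⟨ω, hω⟩
  refine le_trans (le_of_eq (Finset.sum_congr rfl fun z hz => ?_))
    (Finset.sum_le_sum_of_subset_of_nonneg (Finset.filter_subset _ _)
      fun _ _ _ => by positivity)
  rw [condAcceptProb_eq _ _ _ (Finset.mem_filter.1 hz).1,
    show ((∏ k, (E.nk k).choose (E.nk1 k) : ℕ) : ℝ) = c from rfl]
  set m : ℕ := (E.acceptT X aT z).card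
  calc _ = |(c : ℝ) * ((m : ℝ) / c - M / (Z * c)) / M| := by
        congr 1
        field_simp
    _ = _ := by rw [abs_div, abs_mul, abs_of_pos hc, abs_of_pos hM]

end SRSE

theorem statement17_general (E : SurveyExperiments.SRSE) {J1 J2 : ℕ}
    (W : Fin E.N → Fin J1 → ℝ) (X : Fin E.N → Fin J2 → ℝ) (aS aT : ℝ) :
    SurveyExperiments.dTV (E.singleStage W X aS aT) (E.twoStage W X aS aT)
      ≤ (if E.acceptedPairs W X aS aT = ∅ then (1 : ℝ) else 0) +
        (if E.acceptedPairs W X aS aT ≠ ∅ then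
          (∫ ω, |E.condAcceptProb X aT ω.1 -
              (E.P (E.accept W X aS aT)).toReal /
                (E.P {ω' : E.Omega | E.MS W ω' ≤ aS}).toReal| ∂E.P) /
            (E.P (E.accept W X aS aT)).toReal
        else 0) := by
  refine (E.dTV_singleStage_twoStage_le W X aS aT).trans ?_
  by_cases hM : E.acceptedPairs W X aS aT = ∅
  · rw [if_pos hM, if_neg (not_not.2 hM), add_zero]
    -- `x / 0 = 0`, so each term of the sum is `1 / #(E.acceptZ W aS)`
    simpa [hM] using (mul_inv_le_one : ((E.acceptZ W aS).card : ℝ) * _ ≤ 1)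
  · rw [if_neg hM, if_pos hM, zero_add]
    exact E.sum_abs_le_integral_div W X aS aT (Finset.nonempty_iff_ne_empty.2 hM)

/-- Theorem S3: the total variation distance between the single-stage
stratified rejective design (uniform over the jointly acceptable pairs `M`) and the
two-stage design is bounded by
`1(M = ∅) + 1(M ≠ ∅) · E|P(M_T ≤ a_T ∣ Z) - P(M_T ≤ a_T ∣ M_S ≤ a_S)| / P(M_T ≤ a_T, M_S ≤ a_S)`,
with the expectation and probabilities computed under the unconditional SRSE design. -/
theorem statement17 (E : SurveyExperiments.SRSE) {J1 J2 : ℕ}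
    (W : Fin E.N → Fin J1 → ℝ) (X : Fin E.N → Fin J2 → ℝ) (aS aT : ℝ)
    (haS : 0 < aS) (haT : 0 < aT)
    (hlo : ∀ k, 2 ≤ E.nk1 k) (hhi : ∀ k, E.nk1 k + 2 ≤ E.nk k)
    (hsub : ∀ k, E.nk k ≤ E.Nk k)
    (hwell : ∀ z ∈ E.acceptZ W aS, (E.acceptT X aT z).Nonempty) :
    SurveyExperiments.dTV (E.singleStage W X aS aT) (E.twoStage W X aS aT)
      ≤ (if E.acceptedPairs W X aS aT = ∅ then (1 : ℝ) else 0) +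
        (if E.acceptedPairs W X aS aT ≠ ∅ then
          (∫ ω, |E.condAcceptProb X aT ω.1 -
              (E.P (E.accept W X aS aT)).toReal /
                (E.P {ω' : E.Omega | E.MS W ω' ≤ aS}).toReal| ∂E.P) /
            (E.P (E.accept W X aS aT)).toReal
        else 0) :=
  statement17_general E W X aS aT
end SurveyExperiments
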